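/- Let (M, d) be a finite metric space, k ≥ 1, and let P_1, …, P_t be probability mass functions on M. For every 1 ≤ i ≤ t+1, the dynamic-programming value function V_i is 1-Lipschitz with respect to the matching distance: for all configurations A and B, |V_i(A) − V_i(B)| ≤ D(A, B). -/

import Mathlib

/-!
No induction over the horizon is needed: for each request `r`, an optimal response `C` from
`B` is also available from `A`, at cost `D(A, C) + V(C) ≤ D(A, B) + D(B, C) + V(C)` by the
triangle inequality for the matching distance. Averaging over `r` with a probability vector
bounds `V_i(A) - V_i(B)` by `D(A, B)`, whatever the later value function `V = V_{i+1}` is.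
-/

/-- The matching distance between two configurations of `k` servers. -/
noncomputable def matchDist {M : Type*} [MetricSpace M] {k : ℕ} (A B : Fin k → M) : ℝ :=
  ⨅ σ : Equiv.Perm (Fin k), ∑ j, dist (A j) (B (σ j))

/-- The dynamic-programming value function for the stochastic `k`-server problem:
`dpVal [P_i, …, P_t] B = V_i(B)`, where `V_{t+1}(B) = 0` and
`V_i(B) = ∑_r P_i(r) · min over configurations A serving r of (D(B, A) + V_{i+1}(A))`. -/
noncomputable def dpVal {M : Type*} [MetricSpace M] [Fintype M] {k : ℕ} :
    List (M → ℝ) → (Fin k → M) → ℝ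
  | [], _ => 0
  | P :: Ps, B => ∑ r : M, P r *
      sInf {c | ∃ A : Fin k → M, (∃ j, r = A j) ∧ c = matchDist B A + dpVal Ps A}

open Finset

section MatchDist

variable {M : Type*} [MetricSpace M] {k : ℕ}

lemma matchDist_le_sum (A B : Fin k → M) (σ : Equiv.Perm (Fin k)) :
    matchDist A B ≤ ∑ j, dist (A j) (B (σ j)) :=
  ciInf_le (Set.finite_range _).bddBelow σ

lemma matchDist_nonneg (A B : Fin k → M) : 0 ≤ matchDist A B :=
  Real.iInf_nonneg fun _ => sum_nonneg fun _ _ => dist_nonneg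

lemma matchDist_comm (A B : Fin k → M) : matchDist A B = matchDist B A := by
  have key : ∀ C D : Fin k → M, matchDist C D ≤ matchDist D C := fun C D =>
    le_ciInf fun σ => (matchDist_le_sum C D σ⁻¹).trans_eq <| by
      rw [← Equiv.sum_comp σ]
      simp [dist_comm]
  exact (key A B).antisymm (key B A)

lemma matchDist_triangle (A B C : Fin k → M) :
    matchDist A C ≤ matchDist A B + matchDist B C := by
  refine le_ciInf_add_ciInf fun σ τ => ?_
  calc matchDist A C ≤ ∑ j, dist (A j) (C ((σ.trans τ) j)) := matchDist_le_sum A C _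
    _ ≤ ∑ j, (dist (A j) (B (σ j)) + dist (B (σ j)) (C (τ (σ j)))) :=
        sum_le_sum fun j _ => dist_triangle _ _ _
    _ = ∑ j, dist (A j) (B (σ j)) + ∑ j, dist (B j) (C (τ j)) := by
        rw [sum_add_distrib, Equiv.sum_comp σ (fun j => dist (B j) (C (τ j)))]

end MatchDist

lemma sInf_le_add_sInf_of_triangle {α : Type*} [Finite α] (d : α → α → ℝ) {x y : α}
    (hd : ∀ a, d x a ≤ d x y + d y a) (p : α → Prop) (hp : ∃ a, p a) (V : α → ℝ) :
    sInf {c | ∃ a, p a ∧ c = d x a + V a} ≤ d x y + sInf {c | ∃ a, p a ∧ c = d y a + V a} := by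
  have hfin : {c | ∃ a, p a ∧ c = d x a + V a}.Finite :=
    (Set.finite_range fun a => d x a + V a).subset fun c ⟨a, _, hc⟩ => ⟨a, hc.symm⟩
  obtain ⟨a, ha⟩ := hp
  rw [← sub_le_iff_le_add']
  refine le_csInf ⟨_, a, ha, rfl⟩ fun c ⟨b, hb, hc⟩ => ?_
  have := csInf_le hfin.bddBelow ⟨b, hb, rfl⟩
  linarith [hd b]

section DpVal

variable {M : Type*} [MetricSpace M] [Fintype M] {k : ℕ}

lemma dpVal_cons_sub_le (hk : 1 ≤ k) {P : M → ℝ} (hP0 : ∀ r, 0 ≤ P r)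
    (hP1 : ∑ r, P r = 1) (Ps : List (M → ℝ)) (A B : Fin k → M) :
    dpVal (P :: Ps) A - dpVal (P :: Ps) B ≤ matchDist A B := by
  rw [dpVal, dpVal, ← sum_sub_distrib]
  calc _ ≤ ∑ r, P r * matchDist A B := sum_le_sum fun r _ => by
          rw [← mul_sub]
          refine mul_le_mul_of_nonneg_left (sub_le_iff_le_add.2 ?_) (hP0 r)
          exact sInf_le_add_sInf_of_triangle matchDist (matchDist_triangle A B)
            (fun C => ∃ j, r = C j) ⟨fun _ => r, ⟨0, hk⟩, rfl⟩ _
    _ = matchDist A B := by rw [← sum_mul, hP1, one_mul]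

lemma abs_dpVal_sub_le (hk : 1 ≤ k) {Ps : List (M → ℝ)} (h0 : ∀ P ∈ Ps, ∀ r, 0 ≤ P r)
    (h1 : ∀ P ∈ Ps, ∑ r, P r = 1) (A B : Fin k → M) :
    |dpVal Ps A - dpVal Ps B| ≤ matchDist A B := by
  cases Ps with
  | nil => simpa [dpVal] using matchDist_nonneg A B
  | cons P Ps =>
    have hP0 := h0 P List.mem_cons_self
    have hP1 := h1 P List.mem_cons_self
    rw [abs_sub_le_iff]
    exact ⟨dpVal_cons_sub_le hk hP0 hP1 Ps A B,
      (dpVal_cons_sub_le hk hP0 hP1 Ps B A).trans_eq (matchDist_comm B A)⟩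

end DpVal

/-- for every `1 ≤ i ≤ t + 1` the value function `V_i` (here
`dpVal` of the list of remaining distributions `P_i, …, P_t`, i.e. the drop of
the full list) is 1-Lipschitz with respect to the matching distance. -/
theorem dpVal_lipschitz {M : Type*} [MetricSpace M] [Fintype M] {k t : ℕ} (hk : 1 ≤ k)
    (P : Fin t → M → ℝ) (hP0 : ∀ i r, 0 ≤ P i r) (hP1 : ∀ i, ∑ r : M, P i r = 1) :
    ∀ i : ℕ, i ≤ t → ∀ A B : Fin k → M,
      |dpVal ((List.ofFn P).drop i) A - dpVal ((List.ofFn P).drop i) B| ≤ matchDist A B := by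
  intro i _ A B
  refine abs_dpVal_sub_le hk (fun Q hQ => ?_) (fun Q hQ => ?_) A B <;>
    obtain ⟨j, rfl⟩ := List.mem_ofFn.mp (List.mem_of_mem_drop hQ)
  exacts [hP0 j, hP1 j]
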